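/- arXiv:1607.02959 — 2 statements merged into one kernel-verified Lean document; each statement's English description precedes it below -/
import Mathlib

section
/- If λ_max(E_{x∼p}[z(x)_S z(x)_Sᵀ]) ≤ D_max, then λ_max((1/m)·Σ_{l=1}^m z^(l)_S (z^(l)_S)ᵀ) < 2·D_max with probability at least 1 − |S|·exp(−m(1−ν)/(4|S|)) over the i.i.d. draw of the m samples from p. -/
/- Common setup: linear influence games (LIGs), the PSNE set, the noisy
observation model, feature vectors, the logistic loss and its gradient,
population/sample Hessian and scatter matrices, and Rayleigh-quotient
encodings of eigenvalue bounds for (symmetric) submatrices.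

Joint actions in `{-1,+1}^n` are modeled as `Fin n → Bool` via the sign map
`sgn` (`true ↦ +1`, `false ↦ -1`).  For player `i`, the feature vector
`z_i(x) = (x_i · x_{-i}, x_i)` and the parameter vector `v_i = (w_{i,-i}, -b_i)`
are indexed by `Fin n`, with the bias coordinate placed at index `i`
(a fixed permutation of the paper's coordinate ordering), so that
`v_i ⬝ᵥ z_i(x) = x_i (∑_{j ≠ i} W i j · x_j - b i)` is player `i`'s payoff. -/

open Matrix Finset

noncomputable section

/-- Sign of a Boolean action: `true ↦ +1`, `false ↦ -1`. -/
def sgn (a : Bool) : ℝ := if a then 1 else -1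

/-- Payoff of player `i` at joint action `x` in the LIG `(W, b)`:
`x_i (∑_{j ≠ i} W i j · x_j - b i)`. -/
def payoff {n : ℕ} (W : Matrix (Fin n) (Fin n) ℝ) (b : Fin n → ℝ)
    (i : Fin n) (x : Fin n → Bool) : ℝ :=
  sgn (x i) * ((∑ j ∈ Finset.univ.erase i, W i j * sgn (x j)) - b i)

/-- The pure-strategy Nash equilibria set `NE(W, b)`. -/
def NEset {n : ℕ} (W : Matrix (Fin n) (Fin n) ℝ) (b : Fin n → ℝ) :
    Finset (Fin n → Bool) :=
  @Finset.filter _ (fun x => ∀ i, 0 ≤ payoff W b i x) (Classical.decPred _)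
    Finset.univ

/-- The observation distribution
`p(x) = q·1[x ∈ NE]/|NE| + (1-q)·1[x ∉ NE]/(2^n - |NE|)`. -/
def pObs {n : ℕ} (q : ℝ) (NE : Finset (Fin n → Bool)) (x : Fin n → Bool) : ℝ :=
  if x ∈ NE then q / (NE.card : ℝ)
  else (1 - q) / ((2 : ℝ) ^ n - (NE.card : ℝ))

/-- The mixture coefficient `ν = (q - c/2^n)/(1 - c/2^n)`, where `c = |NE*|`. -/
def mixCoef (n : ℕ) (q : ℝ) (c : ℕ) : ℝ :=
  (q - (c : ℝ) / (2 : ℝ) ^ n) / (1 - (c : ℝ) / (2 : ℝ) ^ n)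

/-- Feature vector `z_i(x) = (x_i·x_{-i}, x_i)` (bias coordinate at index `i`). -/
def zvec {n : ℕ} (i : Fin n) (x : Fin n → Bool) : Fin n → ℝ :=
  fun j => if j = i then sgn (x i) else sgn (x i) * sgn (x j)

/-- Parameter vector `v_i = (w_{i,-i}, -b_i)` (bias coordinate at index `i`). -/
def vvec {n : ℕ} (W : Matrix (Fin n) (Fin n) ℝ) (b : Fin n → ℝ) (i : Fin n) :
    Fin n → ℝ :=
  fun j => if j = i then -b i else W i j

/-- Support `S = {j : v_j ≠ 0}` of a vector. -/
def supp {n : ℕ} (v : Fin n → ℝ) : Finset (Fin n) :=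
  @Finset.filter _ (fun j => v j ≠ 0) (Classical.decPred _) Finset.univ

/-- `η(s) = 1/(e^{s/2} + e^{-s/2})²`. -/
def eta (s : ℝ) : ℝ := 1 / (Real.exp (s / 2) + Real.exp (-s / 2)) ^ 2

/-- Logistic loss `ℓ_i(v, D) = (1/m) ∑_l log(1 + exp(-vᵀ z_i(x⁽ˡ⁾)))`. -/
def loss {n m : ℕ} (i : Fin n) (v : Fin n → ℝ)
    (D : Fin m → (Fin n → Bool)) : ℝ :=
  (1 / (m : ℝ)) * ∑ l, Real.log (1 + Real.exp (-(v ⬝ᵥ zvec i (D l))))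

/-- Gradient of the logistic loss,
`∇ℓ(v, D) = (1/m) ∑_l (-z⁽ˡ⁾)/(1 + exp(vᵀ z⁽ˡ⁾))`. -/
def gradLoss {n m : ℕ} (i : Fin n) (v : Fin n → ℝ)
    (D : Fin m → (Fin n → Bool)) : Fin n → ℝ :=
  fun j => (1 / (m : ℝ)) *
    ∑ l, -(zvec i (D l) j) / (1 + Real.exp (v ⬝ᵥ zvec i (D l)))

/-- ℓ1 norm `‖v‖₁ = ∑_j |v_j|`. -/
def norm1 {n : ℕ} (v : Fin n → ℝ) : ℝ := ∑ j, |v j|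

/-- Quadratic form `yᵀ M y`. -/
def quadForm {n : ℕ} (M : Matrix (Fin n) (Fin n) ℝ) (y : Fin n → ℝ) : ℝ :=
  y ⬝ᵥ M.mulVec y

/-- `λ_min(M_SS) ≥ c`, encoded via the Rayleigh quotient over vectors
supported on `S` (exactly equivalent for symmetric `M`). -/
def minEigSubGE {n : ℕ} (M : Matrix (Fin n) (Fin n) ℝ) (S : Finset (Fin n))
    (c : ℝ) : Prop :=
  ∀ y : Fin n → ℝ, (∀ j ∉ S, y j = 0) → c * (∑ j, y j ^ 2) ≤ quadForm M y

/-- `λ_min(M_SS) > c` (Rayleigh form; equivalent for symmetric `M` since the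
unit sphere of the finite-dimensional subspace is compact). -/
def minEigSubGT {n : ℕ} (M : Matrix (Fin n) (Fin n) ℝ) (S : Finset (Fin n))
    (c : ℝ) : Prop :=
  ∀ y : Fin n → ℝ, (∀ j ∉ S, y j = 0) → y ≠ 0 →
    c * (∑ j, y j ^ 2) < quadForm M y

/-- `λ_max(M_SS) ≤ c` (Rayleigh form). -/
def maxEigSubLE {n : ℕ} (M : Matrix (Fin n) (Fin n) ℝ) (S : Finset (Fin n))
    (c : ℝ) : Prop :=
  ∀ y : Fin n → ℝ, (∀ j ∉ S, y j = 0) → quadForm M y ≤ c * (∑ j, y j ^ 2)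

/-- `λ_max(M_SS) < c` (Rayleigh form). -/
def maxEigSubLT {n : ℕ} (M : Matrix (Fin n) (Fin n) ℝ) (S : Finset (Fin n))
    (c : ℝ) : Prop :=
  ∀ y : Fin n → ℝ, (∀ j ∉ S, y j = 0) → y ≠ 0 →
    quadForm M y < c * (∑ j, y j ^ 2)

/-- `λ_max(M_SS) ≥ c` (Rayleigh form: some nonzero supported vector attains it). -/
def maxEigSubGE {n : ℕ} (M : Matrix (Fin n) (Fin n) ℝ) (S : Finset (Fin n))
    (c : ℝ) : Prop :=
  ∃ y : Fin n → ℝ, (∀ j ∉ S, y j = 0) ∧ y ≠ 0 ∧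
    c * (∑ j, y j ^ 2) ≤ quadForm M y

/-- Population Hessian `H*_i = E_{x∼p}[η(vᵀz_i(x)) z_i(x) z_i(x)ᵀ]`. -/
def popHess {n : ℕ} (q : ℝ) (NE : Finset (Fin n → Bool)) (i : Fin n)
    (v : Fin n → ℝ) : Matrix (Fin n) (Fin n) ℝ :=
  ∑ x : Fin n → Bool,
    (pObs q NE x * eta (v ⬝ᵥ zvec i x)) • vecMulVec (zvec i x) (zvec i x)

/-- Population scatter matrix `E_{x∼p}[z_i(x) z_i(x)ᵀ]`. -/
def popScatter {n : ℕ} (q : ℝ) (NE : Finset (Fin n → Bool)) (i : Fin n) :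
    Matrix (Fin n) (Fin n) ℝ :=
  ∑ x : Fin n → Bool, pObs q NE x • vecMulVec (zvec i x) (zvec i x)

/-- Sample Hessian `H^m = (1/m) ∑_l η(vᵀz⁽ˡ⁾) z⁽ˡ⁾ (z⁽ˡ⁾)ᵀ`. -/
def sampleHess {n m : ℕ} (i : Fin n) (v : Fin n → ℝ)
    (D : Fin m → (Fin n → Bool)) : Matrix (Fin n) (Fin n) ℝ :=
  (1 / (m : ℝ)) •
    ∑ l, eta (v ⬝ᵥ zvec i (D l)) • vecMulVec (zvec i (D l)) (zvec i (D l))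

/-- Sample scatter matrix `(1/m) ∑_l z⁽ˡ⁾ (z⁽ˡ⁾)ᵀ`. -/
def sampleScatter {n m : ℕ} (i : Fin n) (D : Fin m → (Fin n → Bool)) :
    Matrix (Fin n) (Fin n) ℝ :=
  (1 / (m : ℝ)) • ∑ l, vecMulVec (zvec i (D l)) (zvec i (D l))

/-- Probability of the event `E` under `m` i.i.d. draws from `p`. -/
def iidProb {X : Type*} [Fintype X] (p : X → ℝ) (m : ℕ)
    (E : Set (Fin m → X)) : ℝ :=
  ∑ D : Fin m → X, E.indicator (fun D => ∏ l, p (D l)) D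

/-- `ρ` is the minimum payoff over the PSNE set of `(W, b)`. -/
def isMinPayoff {n : ℕ} (W : Matrix (Fin n) (Fin n) ℝ) (b : Fin n → ℝ)
    (ρ : ℝ) : Prop :=
  IsLeast {r : ℝ | ∃ x ∈ NEset W b, ∃ i, r = payoff W b i x} ρ

/-! Restricted to the coordinates in `S`, every sample contributes a rank-one matrix `ζζᵀ` with
`‖ζ‖² = |S| = s`, and the claim is a matrix Chernoff bound for such sums, in which the
Golden–Thompson inequality is replaced by an elementary rank-one estimate: for `H ⪰ 0`,
`s · tr e^{θ(H + ζζᵀ)} ≤ s · tr e^{θH} + (e^{θs} - 1) · ζᵀ e^{θH} ζ`.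
Termwise in the exponential series this reads
`s · tr (H + ζζᵀ)^k ≤ s · tr H^k + ζᵀ((H + s)^k - H^k)ζ`: in the `ζ`-quadratic form, `H + s` is a
commuting majorant of `H + ζζᵀ`, by the log-convexity `(ζᵀH^aζ)(ζᵀH^bζ) ≤ s · ζᵀH^{a+b}ζ` of the
moments of `H`. Averaging over `ζ` with `E[ζζᵀ] ⪯ D` gives
`E tr e^{θN_m} ≤ s (1 + (e^{θs} - 1) D / s)^m` for the sum `N_m` of `m` samples, and Markov's
inequality with `e^{θλ_max(N)} ≤ tr e^{θN}`, at `θ = log 2 / s` and threshold `2Dm`, bounds the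
failure probability by `s · exp(-(2 log 2 - 1) D m / s) ≤ s · exp(-m / (4s))`, as `D ≥ 1`. -/

open scoped Nat

lemma mul_le_zero_mul_add_of_sq_le {h : ℕ → ℝ} (h0 : ∀ t, 0 ≤ h t)
    (hlc : ∀ t, h (t + 1) ^ 2 ≤ h t * h (t + 2)) (a b : ℕ) :
    h a * h b ≤ h 0 * h (a + b) := by
  have ratio : ∀ i j, i ≤ j → h (i + 1) * h j ≤ h i * h (j + 1) := by
    intro i j hij
    induction j, hij using Nat.le_induction with
    | base => rw [mul_comm]
    | succ j _ ih =>
      rcases (h0 j).eq_or_lt with hj | hj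
      · have hsq := hlc j
        rw [← hj, zero_mul] at hsq
        rw [pow_eq_zero_iff two_ne_zero |>.mp (le_antisymm hsq (sq_nonneg _)), mul_zero]
        exact mul_nonneg (h0 _) (h0 _)
      · refine le_of_mul_le_mul_right ?_ hj
        calc h (i + 1) * h (j + 1) * h j = h (i + 1) * h j * h (j + 1) := by ring
          _ ≤ h i * h (j + 1) * h (j + 1) := by gcongr; exact h0 _
          _ = h i * h (j + 1) ^ 2 := by ring
          _ ≤ h i * (h j * h (j + 2)) := by gcongr; exacts [h0 _, hlc j]
          _ = h i * h (j + 1 + 1) * h j := by ring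
  have ordered : ∀ i j, i ≤ j → h i * h j ≤ h 0 * h (i + j) := by
    intro i
    induction i with
    | zero => simp
    | succ i ih =>
      intro j hij
      calc h (i + 1) * h j ≤ h i * h (j + 1) := ratio i j (by omega)
        _ ≤ h 0 * h (i + (j + 1)) := ih (j + 1) (by omega)
        _ = h 0 * h (i + 1 + j) := by rw [Nat.add_right_comm, Nat.add_assoc]
  rcases le_total a b with hab | hba
  · exact ordered a b hab
  · simpa only [mul_comm (h a), Nat.add_comm] using ordered b a hba

namespace Matrix

section Quadratic

variable {ι κ : Type*} [Fintype ι]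

lemma dotProduct_sq_le (u v : ι → ℝ) : (u ⬝ᵥ v) ^ 2 ≤ (u ⬝ᵥ u) * (v ⬝ᵥ v) := by
  simpa only [dotProduct, sq] using sum_mul_sq_le_sq_mul_sq univ u v

lemma dotProduct_vecMulVec_mulVec (x u v w : ι → ℝ) :
    x ⬝ᵥ vecMulVec u v *ᵥ w = (x ⬝ᵥ u) * (v ⬝ᵥ w) := by
  simp [vecMulVec_mulVec, dotProduct_smul, mul_comm]

lemma dotProduct_mul_vecMulVec_mul_mulVec (x y u v : ι → ℝ) (A B : Matrix ι ι ℝ) :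
    x ⬝ᵥ (A * vecMulVec u v * B) *ᵥ y = (x ⬝ᵥ A *ᵥ u) * (v ⬝ᵥ B *ᵥ y) := by
  simp [← mulVec_mulVec, vecMulVec_mulVec, mulVec_smul, dotProduct_smul, mul_comm]

lemma trace_mul_vecMulVec (B : Matrix ι ι ℝ) (u v : ι → ℝ) :
    (B * vecMulVec u v).trace = v ⬝ᵥ B *ᵥ u := by
  simp only [trace, diag, mul_apply, vecMulVec_apply, dotProduct, mulVec, mul_sum]
  exact sum_congr rfl fun _ _ => sum_congr rfl fun _ _ => by ring

lemma dotProduct_add_smul_mulVec (ζ : ι → ℝ) (A B : Matrix ι ι ℝ) (r : ℝ) :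
    ζ ⬝ᵥ (A + r • B) *ᵥ ζ = ζ ⬝ᵥ A *ᵥ ζ + r * (ζ ⬝ᵥ B *ᵥ ζ) := by
  rw [add_mulVec, smul_mulVec, dotProduct_add, dotProduct_smul, smul_eq_mul]

lemma dotProduct_sum_smul_vecMulVec_mulVec (s : Finset κ) (w : κ → ℝ) (v : κ → ι → ℝ)
    (y : ι → ℝ) :
    y ⬝ᵥ (∑ k ∈ s, w k • vecMulVec (v k) (v k)) *ᵥ y = ∑ k ∈ s, w k * (v k ⬝ᵥ y) ^ 2 := by
  rw [sum_mulVec, dotProduct_sum]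
  refine sum_congr rfl fun k _ => ?_
  rw [smul_mulVec, dotProduct_smul, dotProduct_vecMulVec_mulVec, smul_eq_mul, dotProduct_comm y, sq]

lemma dotProduct_self_eq_card {v : ι → ℝ} (hv : ∀ j, v j * v j = 1) :
    v ⬝ᵥ v = Fintype.card ι := by
  simp [dotProduct, hv]

lemma IsHermitian.vecMul_eq_mulVec {H : Matrix ι ι ℝ} (hH : H.IsHermitian) (x : ι → ℝ) :
    x ᵥ* H = H *ᵥ x := by
  rw [← mulVec_transpose, ← conjTranspose_eq_transpose_of_trivial, hH.eq]

namespace PosSemidef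

variable {P : Matrix ι ι ℝ}

lemma dotProduct_mulVec_nonneg' (hP : P.PosSemidef) (x : ι → ℝ) : 0 ≤ x ⬝ᵥ P *ᵥ x := by
  simpa using hP.dotProduct_mulVec_nonneg x

lemma exists_eq_sum_vecMulVec (hP : P.PosSemidef) :
    ∃ (r : ℕ) (v : Fin r → ι → ℝ), P = ∑ i, vecMulVec (v i) (v i) := by
  simpa using posSemidef_iff_eq_sum_vecMulVec.mp hP

lemma dotProduct_mulVec_sq_le (hP : P.PosSemidef) (x y : ι → ℝ) :
    (x ⬝ᵥ P *ᵥ y) ^ 2 ≤ (x ⬝ᵥ P *ᵥ x) * (y ⬝ᵥ P *ᵥ y) := by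
  obtain ⟨r, v, rfl⟩ := hP.exists_eq_sum_vecMulVec
  simpa only [sum_mulVec, dotProduct_sum, dotProduct_vecMulVec_mulVec, dotProduct_comm (v _) x,
    dotProduct_comm y (v _), sq] using
    sum_mul_sq_le_sq_mul_sq univ (fun i => x ⬝ᵥ v i) (fun i => v i ⬝ᵥ y)

lemma dotProduct_mulVec_le_mul_trace (hP : P.PosSemidef) (u : ι → ℝ) :
    u ⬝ᵥ P *ᵥ u ≤ (u ⬝ᵥ u) * P.trace := by
  obtain ⟨r, v, rfl⟩ := hP.exists_eq_sum_vecMulVec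
  rw [sum_mulVec, dotProduct_sum, trace_sum, mul_sum]
  refine sum_le_sum fun i _ => ?_
  simpa only [dotProduct_vecMulVec_mulVec, trace_vecMulVec, dotProduct_comm (v i) u, sq] using
    dotProduct_sq_le u (v i)

lemma trace_mul_le {A : Matrix ι ι ℝ} (hP : P.PosSemidef) {c : ℝ}
    (hA : ∀ y, y ⬝ᵥ A *ᵥ y ≤ c * (y ⬝ᵥ y)) : (P * A).trace ≤ c * P.trace := by
  obtain ⟨r, v, rfl⟩ := hP.exists_eq_sum_vecMulVec
  rw [sum_mul, trace_sum, trace_sum, mul_sum]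
  refine sum_le_sum fun i _ => ?_
  rw [trace_vecMulVec, trace_mul_comm, trace_mul_vecMulVec]
  exact hA (v i)

end PosSemidef

end Quadratic

section Powers

variable {ι : Type*} [Fintype ι] [DecidableEq ι]

lemma pow_mul_add_smul_one_pow_succ (H : Matrix ι ι ℝ) (r : ℝ) (a d : ℕ) :
    H ^ d * (H + r • 1) ^ (a + 1) =
      H ^ (d + 1) * (H + r • 1) ^ a + r • (H ^ d * (H + r • 1) ^ a) := by
  rw [pow_succ', ← mul_assoc, mul_add, add_mul, pow_succ, mul_smul_comm, mul_one, smul_mul_assoc]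

lemma pow_mul_add_vecMulVec_pow_succ (H : Matrix ι ι ℝ) (ζ : ι → ℝ) (a b : ℕ) :
    H ^ b * (H + vecMulVec ζ ζ) ^ (a + 1) =
      H ^ (b + 1) * (H + vecMulVec ζ ζ) ^ a + H ^ b * vecMulVec ζ ζ * (H + vecMulVec ζ ζ) ^ a := by
  rw [pow_succ', ← mul_assoc, mul_add, add_mul, ← pow_succ]

namespace PosSemidef

variable {H : Matrix ι ι ℝ}

lemma dotProduct_pow_mulVec_sq_le (hH : H.PosSemidef) (ζ : ι → ℝ) (t : ℕ) :
    (ζ ⬝ᵥ H ^ (t + 1) *ᵥ ζ) ^ 2 ≤ (ζ ⬝ᵥ H ^ t *ᵥ ζ) * (ζ ⬝ᵥ H ^ (t + 2) *ᵥ ζ) := by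
  have h1 : ζ ⬝ᵥ H ^ (t + 1) *ᵥ ζ = ζ ⬝ᵥ H ^ t *ᵥ (H *ᵥ ζ) := by
    rw [pow_succ, ← mulVec_mulVec]
  have h2 : ζ ⬝ᵥ H ^ (t + 2) *ᵥ ζ = (H *ᵥ ζ) ⬝ᵥ H ^ t *ᵥ (H *ᵥ ζ) := by
    rw [pow_succ, pow_succ', ← mulVec_mulVec, ← mulVec_mulVec, dotProduct_mulVec,
      hH.isHermitian.vecMul_eq_mulVec]
  rw [h1, h2]
  exact (hH.pow t).dotProduct_mulVec_sq_le ζ (H *ᵥ ζ)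

lemma dotProduct_pow_mul_dotProduct_pow_le (hH : H.PosSemidef) (ζ : ι → ℝ) (a b : ℕ) :
    (ζ ⬝ᵥ H ^ a *ᵥ ζ) * (ζ ⬝ᵥ H ^ b *ᵥ ζ) ≤ (ζ ⬝ᵥ ζ) * (ζ ⬝ᵥ H ^ (a + b) *ᵥ ζ) := by
  simpa using mul_le_zero_mul_add_of_sq_le (h := fun t => ζ ⬝ᵥ H ^ t *ᵥ ζ)
    (fun t => (hH.pow t).dotProduct_mulVec_nonneg' ζ) (hH.dotProduct_pow_mulVec_sq_le ζ) a b

lemma dotProduct_mulVec_pow_mul_le (hH : H.PosSemidef) (y : ι → ℝ) (k : ℕ) :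
    (y ⬝ᵥ H *ᵥ y) ^ k * (y ⬝ᵥ y) ≤ (y ⬝ᵥ y) ^ k * (y ⬝ᵥ H ^ k *ᵥ y) := by
  induction k with
  | zero => simp
  | succ k ih =>
    have h1 := hH.dotProduct_pow_mul_dotProduct_pow_le y 1 k
    rw [pow_one, Nat.add_comm] at h1
    have hq := hH.dotProduct_mulVec_nonneg' y
    have hyy : 0 ≤ y ⬝ᵥ y := dotProduct_self_star_nonneg y
    calc (y ⬝ᵥ H *ᵥ y) ^ (k + 1) * (y ⬝ᵥ y)
        = (y ⬝ᵥ H *ᵥ y) * ((y ⬝ᵥ H *ᵥ y) ^ k * (y ⬝ᵥ y)) := by ring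
      _ ≤ (y ⬝ᵥ H *ᵥ y) * ((y ⬝ᵥ y) ^ k * (y ⬝ᵥ H ^ k *ᵥ y)) := by gcongr
      _ = (y ⬝ᵥ y) ^ k * ((y ⬝ᵥ H *ᵥ y) * (y ⬝ᵥ H ^ k *ᵥ y)) := by ring
      _ ≤ (y ⬝ᵥ y) ^ k * ((y ⬝ᵥ y) * (y ⬝ᵥ H ^ (k + 1) *ᵥ y)) := by gcongr
      _ = (y ⬝ᵥ y) ^ (k + 1) * (y ⬝ᵥ H ^ (k + 1) *ᵥ y) := by ring

lemma pow_le_trace_pow (hH : H.PosSemidef) {y : ι → ℝ} (hy : 0 < y ⬝ᵥ y) {t : ℝ}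
    (ht : 0 ≤ t) (hty : t * (y ⬝ᵥ y) ≤ y ⬝ᵥ H *ᵥ y) (k : ℕ) : t ^ k ≤ (H ^ k).trace := by
  refine le_of_mul_le_mul_right ?_ (pow_pos hy (k + 1))
  calc t ^ k * (y ⬝ᵥ y) ^ (k + 1) = (t * (y ⬝ᵥ y)) ^ k * (y ⬝ᵥ y) := by ring
    _ ≤ (y ⬝ᵥ H *ᵥ y) ^ k * (y ⬝ᵥ y) := by gcongr
    _ ≤ (y ⬝ᵥ y) ^ k * (y ⬝ᵥ H ^ k *ᵥ y) := hH.dotProduct_mulVec_pow_mul_le y k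
    _ ≤ (y ⬝ᵥ y) ^ k * ((y ⬝ᵥ y) * (H ^ k).trace) := by
        gcongr; exact (hH.pow k).dotProduct_mulVec_le_mul_trace y
    _ = (H ^ k).trace * (y ⬝ᵥ y) ^ (k + 1) := by ring

lemma dotProduct_pow_mul_add_smul_one_pow_mul_le (hH : H.PosSemidef) (ζ : ι → ℝ) (a d b : ℕ) :
    (ζ ⬝ᵥ (H ^ d * (H + (ζ ⬝ᵥ ζ) • 1) ^ a) *ᵥ ζ) * (ζ ⬝ᵥ H ^ b *ᵥ ζ) ≤
      (ζ ⬝ᵥ ζ) * (ζ ⬝ᵥ (H ^ (d + b) * (H + (ζ ⬝ᵥ ζ) • 1) ^ a) *ᵥ ζ) := by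
  induction a generalizing d with
  | zero => simpa using hH.dotProduct_pow_mul_dotProduct_pow_le ζ d b
  | succ a ih =>
    have hs : 0 ≤ ζ ⬝ᵥ ζ := dotProduct_self_star_nonneg ζ
    have ih1 := ih (d + 1)
    rw [Nat.add_right_comm] at ih1
    simp only [pow_mul_add_smul_one_pow_succ, dotProduct_add_smul_mulVec]
    nlinarith [mul_le_mul_of_nonneg_left (ih d) hs]

lemma dotProduct_pow_mul_add_vecMulVec_pow_le (hH : H.PosSemidef) (ζ : ι → ℝ) (a b : ℕ) :
    ζ ⬝ᵥ (H ^ b * (H + vecMulVec ζ ζ) ^ a) *ᵥ ζ ≤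
      ζ ⬝ᵥ (H ^ b * (H + (ζ ⬝ᵥ ζ) • 1) ^ a) *ᵥ ζ := by
  induction a generalizing b with
  | zero => simp
  | succ a ih =>
    have hc : 0 ≤ ζ ⬝ᵥ H ^ b *ᵥ ζ := (hH.pow b).dotProduct_mulVec_nonneg' ζ
    have key := hH.dotProduct_pow_mul_add_smul_one_pow_mul_le ζ a 0 b
    have ih0 := ih 0
    simp only [pow_zero, one_mul, zero_add] at ih0 key
    rw [pow_mul_add_vecMulVec_pow_succ, add_mulVec, dotProduct_add,
      dotProduct_mul_vecMulVec_mul_mulVec, pow_mul_add_smul_one_pow_succ,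
      dotProduct_add_smul_mulVec]
    nlinarith [ih (b + 1), mul_le_mul_of_nonneg_left ih0 hc]

lemma trace_pow_mul_add_vecMulVec_pow_le (hH : H.PosSemidef) (ζ : ι → ℝ) (a b : ℕ) :
    (ζ ⬝ᵥ ζ) * (H ^ b * (H + vecMulVec ζ ζ) ^ a).trace ≤
      (ζ ⬝ᵥ ζ) * (H ^ (b + a)).trace +
        ζ ⬝ᵥ (H ^ b * ((H + (ζ ⬝ᵥ ζ) • 1) ^ a - H ^ a)) *ᵥ ζ := by
  induction a generalizing b with
  | zero => simp
  | succ a ih =>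
    have hsplit : (H ^ b * (H + vecMulVec ζ ζ) ^ (a + 1)).trace =
        (H ^ (b + 1) * (H + vecMulVec ζ ζ) ^ a).trace +
          ζ ⬝ᵥ (H ^ b * (H + vecMulVec ζ ζ) ^ a) *ᵥ ζ := by
      rw [pow_succ, ← mul_assoc, mul_add, trace_add, trace_mul_vecMulVec, trace_mul_comm,
        ← mul_assoc, ← pow_succ']
    have hshift : H ^ b * ((H + (ζ ⬝ᵥ ζ) • 1) ^ (a + 1) - H ^ (a + 1)) =
        H ^ (b + 1) * ((H + (ζ ⬝ᵥ ζ) • 1) ^ a - H ^ a) +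
          (ζ ⬝ᵥ ζ) • (H ^ b * (H + (ζ ⬝ᵥ ζ) • 1) ^ a) := by
      rw [mul_sub, mul_sub, pow_mul_add_smul_one_pow_succ, pow_succ' H a, ← mul_assoc, ← pow_succ]
      abel
    have hs : 0 ≤ ζ ⬝ᵥ ζ := dotProduct_self_star_nonneg ζ
    have ih1 := ih (b + 1)
    rw [Nat.add_right_comm, Nat.add_assoc] at ih1
    rw [hsplit, hshift, dotProduct_add_smul_mulVec]
    nlinarith [mul_le_mul_of_nonneg_left (hH.dotProduct_pow_mul_add_vecMulVec_pow_le ζ a b) hs]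

end PosSemidef

end Powers

section Exponential

variable {ι : Type*} [Fintype ι] [DecidableEq ι] {H : Matrix ι ι ℝ}

lemma hasSum_trace_exp_smul_mul (θ : ℝ) (M B : Matrix ι ι ℝ) :
    HasSum (fun k => θ ^ k / k ! * (M ^ k * B).trace) (NormedSpace.exp (θ • M) * B).trace := by
  have hexp : HasSum (fun k => (k ! : ℝ)⁻¹ • (θ • M) ^ k) (NormedSpace.exp (θ • M)) :=
    open scoped Matrix.Norms.Operator in NormedSpace.exp_series_hasSum_exp' (θ • M)
  have hcont : Continuous fun A : Matrix ι ι ℝ => (A * B).trace :=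
    (continuous_id.matrix_mul continuous_const).matrix_trace
  convert hexp.map ((traceAddMonoidHom ι ℝ).comp (AddMonoidHom.mulRight B)) hcont using 1
  · ext k
    simp [smul_pow, smul_smul, trace_smul, div_eq_inv_mul, mul_comm]
  · rfl

lemma hasSum_trace_exp_smul (θ : ℝ) (M : Matrix ι ι ℝ) :
    HasSum (fun k => θ ^ k / k ! * (M ^ k).trace) (NormedSpace.exp (θ • M)).trace := by
  simpa using hasSum_trace_exp_smul_mul θ M 1

lemma hasSum_dotProduct_exp_smul_mulVec (θ : ℝ) (M : Matrix ι ι ℝ) (ζ : ι → ℝ) :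
    HasSum (fun k => θ ^ k / k ! * (ζ ⬝ᵥ M ^ k *ᵥ ζ)) (ζ ⬝ᵥ NormedSpace.exp (θ • M) *ᵥ ζ) := by
  simpa only [trace_mul_vecMulVec] using hasSum_trace_exp_smul_mul θ M (vecMulVec ζ ζ)

lemma exp_smul_add_smul_one (θ r : ℝ) (M : Matrix ι ι ℝ) :
    NormedSpace.exp (θ • (M + r • 1)) = Real.exp (θ * r) • NormedSpace.exp (θ • M) := by
  have hcomm : Commute (θ • M) ((θ * r) • (1 : Matrix ι ι ℝ)) :=
    (Commute.one_right _).smul_right _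
  have hscalar : NormedSpace.exp ((θ * r) • (1 : Matrix ι ι ℝ)) = Real.exp (θ * r) • 1 := by
    simp only [← Algebra.algebraMap_eq_smul_one, Real.exp_eq_exp_ℝ]
    open scoped Matrix.Norms.Operator in exact (NormedSpace.algebraMap_exp_comm _).symm
  rw [smul_add, smul_smul, exp_add_of_commute _ _ hcomm, hscalar, mul_smul_comm, mul_one]

lemma IsHermitian.posSemidef_exp {A : Matrix ι ι ℝ} (hA : A.IsHermitian) :
    (NormedSpace.exp A).PosSemidef := by
  have hhalf : NormedSpace.exp A =
      (NormedSpace.exp ((1 / 2 : ℝ) • A))ᴴ * NormedSpace.exp ((1 / 2 : ℝ) • A) := by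
    rw [(hA.smul (IsSelfAdjoint.all _)).exp.eq, ← exp_add_of_commute _ _ (Commute.refl _),
      ← add_smul]
    norm_num
  rw [hhalf]
  exact posSemidef_conjTranspose_mul_self _

lemma PosSemidef.posSemidef_exp_smul (hH : H.PosSemidef) (θ : ℝ) :
    (NormedSpace.exp (θ • H)).PosSemidef :=
  (hH.isHermitian.smul (IsSelfAdjoint.all θ)).posSemidef_exp

lemma PosSemidef.trace_exp_add_vecMulVec_le (hH : H.PosSemidef) (ζ : ι → ℝ) {θ : ℝ}
    (hθ : 0 ≤ θ) :
    (ζ ⬝ᵥ ζ) * (NormedSpace.exp (θ • (H + vecMulVec ζ ζ))).trace ≤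
      (ζ ⬝ᵥ ζ) * (NormedSpace.exp (θ • H)).trace +
        (Real.exp (θ * (ζ ⬝ᵥ ζ)) - 1) * (ζ ⬝ᵥ NormedSpace.exp (θ • H) *ᵥ ζ) := by
  have hle := hasSum_le (fun k => ?_)
    ((hasSum_trace_exp_smul θ (H + vecMulVec ζ ζ)).mul_left (ζ ⬝ᵥ ζ))
    (((hasSum_trace_exp_smul θ H).mul_left (ζ ⬝ᵥ ζ)).add
      ((hasSum_dotProduct_exp_smul_mulVec θ (H + (ζ ⬝ᵥ ζ) • 1) ζ).sub
        (hasSum_dotProduct_exp_smul_mulVec θ H ζ)))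
  · rw [exp_smul_add_smul_one, smul_mulVec, dotProduct_smul, smul_eq_mul] at hle
    linarith
  · have hk := hH.trace_pow_mul_add_vecMulVec_pow_le ζ k 0
    simp only [pow_zero, one_mul, zero_add, sub_mulVec, dotProduct_sub] at hk
    nlinarith [mul_le_mul_of_nonneg_left hk (by positivity : 0 ≤ θ ^ k / k !)]

lemma PosSemidef.exp_mul_le_trace_exp (hH : H.PosSemidef) {y : ι → ℝ} (hy : 0 < y ⬝ᵥ y)
    {t θ : ℝ} (ht : 0 ≤ t) (hθ : 0 ≤ θ) (hty : t * (y ⬝ᵥ y) ≤ y ⬝ᵥ H *ᵥ y) :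
    Real.exp (θ * t) ≤ (NormedSpace.exp (θ • H)).trace := by
  have hexp : HasSum (fun k => (θ * t) ^ k / k !) (Real.exp (θ * t)) := by
    rw [Real.exp_eq_exp_ℝ]
    exact NormedSpace.expSeries_div_hasSum_exp _
  refine hasSum_le (fun k => ?_) hexp (hasSum_trace_exp_smul θ H)
  rw [mul_pow, mul_div_right_comm]
  gcongr
  exact hH.pow_le_trace_pow hy ht hty k

end Exponential

end Matrix

section Iid

variable {X : Type*} [Fintype X] {p : X → ℝ} {m : ℕ}

lemma sum_prod_eq_one (hp1 : ∑ x, p x = 1) (m : ℕ) : ∑ D : Fin m → X, ∏ l, p (D l) = 1 := by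
  rw [← Fintype.sum_pow, hp1, one_pow]

lemma iidProb_eq_one_sub_compl (hp1 : ∑ x, p x = 1) (E : Set (Fin m → X)) :
    iidProb p m E = 1 - iidProb p m Eᶜ := by
  rw [eq_sub_iff_add_eq, iidProb, iidProb, ← sum_add_distrib, ← sum_prod_eq_one hp1 m]
  exact sum_congr rfl fun D _ => Set.indicator_self_add_compl_apply _ _ _

lemma iidProb_mono (hp : ∀ x, 0 ≤ p x) {E F : Set (Fin m → X)} (hEF : E ⊆ F) :
    iidProb p m E ≤ iidProb p m F :=
  sum_le_sum fun _ _ => Set.indicator_le_indicator_of_subset hEF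
    (fun D => prod_nonneg fun l _ => hp (D l)) _

lemma iidProb_le_sum_prod_mul (hp : ∀ x, 0 ≤ p x) {E : Set (Fin m → X)}
    {f : (Fin m → X) → ℝ} (hf0 : ∀ D, 0 ≤ f D) (hf : ∀ D ∈ E, 1 ≤ f D) :
    iidProb p m E ≤ ∑ D, (∏ l, p (D l)) * f D := by
  refine sum_le_sum fun D _ => ?_
  have hpD : 0 ≤ ∏ l, p (D l) := prod_nonneg fun l _ => hp (D l)
  by_cases hD : D ∈ E
  · rw [Set.indicator_of_mem hD]
    exact le_mul_of_one_le_right hpD (hf D hD)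
  · rw [Set.indicator_of_notMem hD]
    exact mul_nonneg hpD (hf0 D)

lemma sum_prod_mul_sum_le_pow_mul {M : Type*} [AddCommMonoid M] (hp : ∀ x, 0 ≤ p x)
    (Y : X → M) (F : M → ℝ) {P : M → Prop} (hP0 : P 0) (hPY : ∀ a x, P a → P (a + Y x))
    {K : ℝ} (hK : 0 ≤ K) (hF : ∀ a, P a → ∑ x, p x * F (a + Y x) ≤ K * F a) (m : ℕ) :
    ∑ D : Fin m → X, (∏ l, p (D l)) * F (∑ l, Y (D l)) ≤ K ^ m * F 0 := by
  have hP : ∀ {m} (D : Fin m → X), P (∑ l, Y (D l)) := by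
    intro m
    induction m with
    | zero => simpa using hP0
    | succ m ih => intro D; rw [Fin.sum_univ_castSucc]; exact hPY _ _ (ih _)
  induction m with
  | zero => simp
  | succ m ih =>
    calc ∑ D : Fin (m + 1) → X, (∏ l, p (D l)) * F (∑ l, Y (D l))
        = ∑ D : Fin m → X, (∏ l, p (D l)) * ∑ x, p x * F (∑ l, Y (D l) + Y x) := by
          rw [← (Fin.snocEquiv fun _ => X).sum_comp, Fintype.sum_prod_type, sum_comm]
          refine sum_congr rfl fun D _ => ?_
          rw [mul_sum]
          refine sum_congr rfl fun x _ => ?_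
          simp only [Fin.snocEquiv, Equiv.coe_fn_mk, Fin.prod_univ_castSucc, Fin.snoc_castSucc,
            Fin.snoc_last, Fin.sum_univ_castSucc]
          ring
      _ ≤ ∑ D : Fin m → X, (∏ l, p (D l)) * (K * F (∑ l, Y (D l))) :=
          sum_le_sum fun D _ => mul_le_mul_of_nonneg_left (hF _ (hP D))
            (prod_nonneg fun l _ => hp (D l))
      _ = K * ∑ D : Fin m → X, (∏ l, p (D l)) * F (∑ l, Y (D l)) := by
          rw [mul_sum]; exact sum_congr rfl fun _ _ => by ring
      _ ≤ K ^ (m + 1) * F 0 := by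
          rw [pow_succ', mul_assoc]; exact mul_le_mul_of_nonneg_left ih hK

end Iid

section MatrixChernoff

variable {X ι : Type*} [Fintype X] [Fintype ι] [DecidableEq ι] {p : X → ℝ} {ζ : X → ι → ℝ}
  {s c θ : ℝ}

lemma sum_mul_trace_exp_add_vecMulVec_le (hp : ∀ x, 0 ≤ p x) (hp1 : ∑ x, p x = 1) (hs : 0 < s)
    (hζ : ∀ x, ζ x ⬝ᵥ ζ x = s)
    (hA : ∀ y, y ⬝ᵥ (∑ x, p x • vecMulVec (ζ x) (ζ x)) *ᵥ y ≤ c * (y ⬝ᵥ y)) (hθ : 0 ≤ θ)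
    {H : Matrix ι ι ℝ} (hH : H.PosSemidef) :
    ∑ x, p x * (NormedSpace.exp (θ • (H + vecMulVec (ζ x) (ζ x)))).trace ≤
      (1 + (Real.exp (θ * s) - 1) / s * c) * (NormedSpace.exp (θ • H)).trace := by
  set E := NormedSpace.exp (θ • H)
  have hE : E.PosSemidef := hH.posSemidef_exp_smul θ
  have hstep : ∀ x, s * (NormedSpace.exp (θ • (H + vecMulVec (ζ x) (ζ x)))).trace ≤
      s * E.trace + (Real.exp (θ * s) - 1) * (ζ x ⬝ᵥ E *ᵥ ζ x) := fun x => by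
    simpa only [hζ x] using hH.trace_exp_add_vecMulVec_le (ζ x) hθ
  have havg : ∑ x, p x * (ζ x ⬝ᵥ E *ᵥ ζ x) ≤ c * E.trace := by
    refine le_of_eq_of_le ?_ (hE.trace_mul_le hA)
    simp only [mul_sum, trace_sum, mul_smul_comm, trace_smul, trace_mul_vecMulVec, smul_eq_mul]
  have hexp : 0 ≤ Real.exp (θ * s) - 1 := sub_nonneg.mpr (Real.one_le_exp (mul_nonneg hθ hs.le))
  refine le_of_mul_le_mul_left ?_ hs
  calc s * ∑ x, p x * (NormedSpace.exp (θ • (H + vecMulVec (ζ x) (ζ x)))).trace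
      = ∑ x, p x * (s * (NormedSpace.exp (θ • (H + vecMulVec (ζ x) (ζ x)))).trace) := by
        rw [mul_sum]; exact sum_congr rfl fun _ _ => by ring
    _ ≤ ∑ x, p x * (s * E.trace + (Real.exp (θ * s) - 1) * (ζ x ⬝ᵥ E *ᵥ ζ x)) :=
        sum_le_sum fun x _ => mul_le_mul_of_nonneg_left (hstep x) (hp x)
    _ = s * E.trace + (Real.exp (θ * s) - 1) * ∑ x, p x * (ζ x ⬝ᵥ E *ᵥ ζ x) := by
        simp only [mul_add, sum_add_distrib, ← sum_mul, hp1, one_mul, mul_sum]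
        exact congrArg _ (sum_congr rfl fun _ _ => by ring)
    _ ≤ s * E.trace + (Real.exp (θ * s) - 1) * (c * E.trace) := by gcongr
    _ = s * ((1 + (Real.exp (θ * s) - 1) / s * c) * E.trace) := by field_simp

lemma one_le_of_dotProduct_sum_smul_vecMulVec_le [Nonempty ι] (hp1 : ∑ x, p x = 1)
    (hζ : ∀ x j, ζ x j * ζ x j = 1)
    (hA : ∀ y, y ⬝ᵥ (∑ x, p x • vecMulVec (ζ x) (ζ x)) *ᵥ y ≤ c * (y ⬝ᵥ y)) : 1 ≤ c := by
  obtain ⟨j⟩ := ‹Nonempty ι›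
  have h := hA (Pi.single j 1)
  rw [dotProduct_sum_smul_vecMulVec_mulVec] at h
  simpa [dotProduct_single, sq, hζ, hp1] using h

theorem iidProb_exists_dotProduct_sum_vecMulVec_ge_le (hp : ∀ x, 0 ≤ p x) (hp1 : ∑ x, p x = 1)
    (hs : 0 < s) (hζ : ∀ x, ζ x ⬝ᵥ ζ x = s) (hc : 0 ≤ c)
    (hA : ∀ y, y ⬝ᵥ (∑ x, p x • vecMulVec (ζ x) (ζ x)) *ᵥ y ≤ c * (y ⬝ᵥ y)) (hθ : 0 ≤ θ)
    {t : ℝ} (ht : 0 ≤ t) (m : ℕ) :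
    iidProb p m {D | ∃ y, y ≠ 0 ∧ t * (y ⬝ᵥ y) ≤ y ⬝ᵥ (∑ l, vecMulVec (ζ (D l)) (ζ (D l))) *ᵥ y} ≤
      Fintype.card ι * Real.exp (-(θ * t)) * (1 + (Real.exp (θ * s) - 1) / s * c) ^ m := by
  have hK : 0 ≤ 1 + (Real.exp (θ * s) - 1) / s * c := by
    have : 0 ≤ Real.exp (θ * s) - 1 := sub_nonneg.mpr (Real.one_le_exp (mul_nonneg hθ hs.le))
    positivity
  have hN : ∀ D : Fin m → X, (∑ l, vecMulVec (ζ (D l)) (ζ (D l))).PosSemidef := fun D =>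
    posSemidef_sum _ fun l _ => by simpa using posSemidef_vecMulVec_self_star (ζ (D l))
  calc iidProb p m _
      ≤ ∑ D : Fin m → X, (∏ l, p (D l)) * (Real.exp (-(θ * t)) *
          (NormedSpace.exp (θ • ∑ l, vecMulVec (ζ (D l)) (ζ (D l)))).trace) := by
        refine iidProb_le_sum_prod_mul hp (fun D => ?_) fun D ⟨y, hy, hty⟩ => ?_
        · exact mul_nonneg (Real.exp_pos _).le
            ((hN D).posSemidef_exp_smul θ).trace_nonneg
        · have hyy : 0 < y ⬝ᵥ y :=
            (dotProduct_self_star_nonneg y).lt_of_ne' (dotProduct_self_eq_zero.not.mpr hy)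
          rw [Real.exp_neg, inv_mul_eq_div, one_le_div (Real.exp_pos _)]
          exact (hN D).exp_mul_le_trace_exp hyy ht hθ hty
    _ = Real.exp (-(θ * t)) * ∑ D : Fin m → X, (∏ l, p (D l)) *
          (NormedSpace.exp (θ • ∑ l, vecMulVec (ζ (D l)) (ζ (D l)))).trace := by
        rw [mul_sum]; exact sum_congr rfl fun _ _ => by ring
    _ ≤ Real.exp (-(θ * t)) * ((1 + (Real.exp (θ * s) - 1) / s * c) ^ m *
          (NormedSpace.exp (θ • (0 : Matrix ι ι ℝ))).trace) := by
        gcongr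
        exact sum_prod_mul_sum_le_pow_mul hp (fun x => vecMulVec (ζ x) (ζ x))
          (fun M => (NormedSpace.exp (θ • M)).trace) PosSemidef.zero
          (fun M x hM => hM.add (by simpa using posSemidef_vecMulVec_self_star (ζ x))) hK
          (fun M hM => sum_mul_trace_exp_add_vecMulVec_le hp hp1 hs hζ hA hθ hM) m
    _ = _ := by rw [smul_zero, NormedSpace.exp_zero, trace_one]; ring

end MatrixChernoff

section Restrict

variable {ι κ : Type*} [Fintype ι] {S : Finset ι} {y : ι → ℝ}

lemma dotProduct_eq_dotProduct_restrict (hy : ∀ j ∉ S, y j = 0) (u : ι → ℝ) :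
    u ⬝ᵥ y = (fun j : S => u j) ⬝ᵥ (fun j : S => y j) := by
  rw [dotProduct, dotProduct, ← sum_subset (subset_univ S) fun j _ hj => by simp [hy j hj]]
  exact (sum_coe_sort S fun j => u j * y j).symm

lemma dotProduct_sum_smul_vecMulVec_mulVec_restrict (hy : ∀ j ∉ S, y j = 0) (s : Finset κ)
    (w : κ → ℝ) (v : κ → ι → ℝ) :
    y ⬝ᵥ (∑ k ∈ s, w k • vecMulVec (v k) (v k)) *ᵥ y =
      (fun j : S => y j) ⬝ᵥ (∑ k ∈ s, w k • vecMulVec (fun j : S => v k j) (fun j : S => v k j)) *ᵥ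
        (fun j : S => y j) := by
  simp only [dotProduct_sum_smul_vecMulVec_mulVec, dotProduct_eq_dotProduct_restrict hy]

end Restrict

section Support

variable {n : ℕ} {κ : Type*} [Fintype κ] {S : Finset (Fin n)}

lemma maxEigSubLT_empty (M : Matrix (Fin n) (Fin n) ℝ) (c : ℝ) : maxEigSubLT M ∅ c :=
  fun _ hy hy0 => absurd (funext fun j => hy j (notMem_empty j)) hy0

lemma restrict_dotProduct_sum_le_of_maxEigSubLE {w : κ → ℝ} {v : κ → Fin n → ℝ} {c : ℝ}
    (h : maxEigSubLE (∑ k, w k • vecMulVec (v k) (v k)) S c) (u : S → ℝ) :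
    u ⬝ᵥ (∑ k, w k • vecMulVec (fun j : S => v k j) (fun j : S => v k j)) *ᵥ u ≤ c * (u ⬝ᵥ u) := by
  set y : Fin n → ℝ := fun j => if hj : j ∈ S then u ⟨j, hj⟩ else 0
  have hy : ∀ j ∉ S, y j = 0 := fun j hj => dif_neg hj
  have hyu : (fun j : S => y j) = u := funext fun j => dif_pos j.2
  have hsq : ∑ j, y j ^ 2 = u ⬝ᵥ u := by
    rw [← hyu, ← dotProduct_eq_dotProduct_restrict hy]
    simp only [dotProduct, sq]
  simpa only [quadForm, dotProduct_sum_smul_vecMulVec_mulVec_restrict hy, hyu, hsq] using h y hy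

lemma exists_restrict_of_not_maxEigSubLT {m : ℕ} {z : Fin m → Fin n → ℝ} {c : ℝ}
    (h : ¬ maxEigSubLT ((1 / (m : ℝ)) • ∑ l, vecMulVec (z l) (z l)) S c) :
    ∃ u : S → ℝ, u ≠ 0 ∧
      c * m * (u ⬝ᵥ u) ≤ u ⬝ᵥ (∑ l, vecMulVec (fun j : S => z l j) (fun j : S => z l j)) *ᵥ u := by
  simp only [maxEigSubLT, not_forall, not_lt, exists_prop] at h
  obtain ⟨y, hy, hy0, hle⟩ := h
  set u : S → ℝ := fun j => y j
  refine ⟨u, fun hu => hy0 (funext fun j => ?_), ?_⟩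
  · by_cases hj : j ∈ S
    · exact congrFun hu ⟨j, hj⟩
    · exact hy j hj
  · rcases Nat.eq_zero_or_pos m with rfl | hm
    · simp
    have hquad := dotProduct_sum_smul_vecMulVec_mulVec_restrict hy univ (fun _ => (1 : ℝ)) z
    have hsq : ∑ j, y j ^ 2 = u ⬝ᵥ u := by
      rw [← dotProduct_eq_dotProduct_restrict hy]
      simp only [dotProduct, sq]
    simp only [one_smul] at hquad
    rw [quadForm, smul_mulVec, dotProduct_smul, smul_eq_mul, hquad, hsq] at hle
    have hm' : (0 : ℝ) < m := by exact_mod_cast hm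
    have := mul_le_mul_of_nonneg_left hle hm'.le
    rw [← mul_assoc (m : ℝ) (1 / m), mul_one_div_cancel hm'.ne', one_mul] at this
    linarith

end Support

lemma sgn_mul_self (a : Bool) : sgn a * sgn a = 1 := by cases a <;> norm_num [sgn]

lemma zvec_mul_self {n : ℕ} (i : Fin n) (x : Fin n → Bool) (j : Fin n) :
    zvec i x j * zvec i x j = 1 := by
  unfold zvec
  split_ifs
  · exact sgn_mul_self _
  · rw [mul_mul_mul_comm, sgn_mul_self, sgn_mul_self, one_mul]

section Observation

variable {n : ℕ} {q : ℝ} {NE : Finset (Fin n → Bool)}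

lemma pObs_nonneg (hq0 : 0 ≤ q) (hq1 : q ≤ 1) (hNE : NE.card < 2 ^ n) (x : Fin n → Bool) :
    0 ≤ pObs q NE x := by
  have : (NE.card : ℝ) < 2 ^ n := by exact_mod_cast hNE
  unfold pObs
  split_ifs
  · positivity
  · exact div_nonneg (by linarith) (by linarith)

lemma sum_pObs (hNE1 : 1 ≤ NE.card) (hNE2 : NE.card < 2 ^ n) : ∑ x, pObs q NE x = 1 := by
  have hcard : ((univ.filter (· ∉ NE)).card : ℝ) = 2 ^ n - NE.card := by
    rw [filter_not, filter_mem_eq_inter, univ_inter, card_sdiff_of_subset (subset_univ _),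
      card_univ, Fintype.card_fun, Fintype.card_bool, Fintype.card_fin, Nat.cast_sub hNE2.le]
    push_cast
    ring
  have h1 : (NE.card : ℝ) ≠ 0 := by positivity
  have h2 : (2 : ℝ) ^ n - NE.card ≠ 0 := sub_ne_zero.mpr (by exact_mod_cast hNE2.ne')
  simp only [pObs, sum_ite, sum_const, filter_mem_eq_inter, univ_inter, nsmul_eq_mul, hcard]
  field_simp
  ring

lemma mixCoef_nonneg (hNE : NE.card < 2 ^ n) (hq : (NE.card : ℝ) / 2 ^ n < q) :
    0 ≤ mixCoef n q NE.card := by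
  have : (NE.card : ℝ) / 2 ^ n < 1 :=
    (div_lt_one (by positivity)).mpr (by exact_mod_cast hNE)
  exact div_nonneg (by linarith) (by linarith)

end Observation

lemma mul_exp_mul_pow_le {s D ν : ℝ} (hs : 0 < s) (hD : 1 ≤ D) (hν : 0 ≤ ν) (m : ℕ) :
    s * Real.exp (-(Real.log 2 / s * (2 * D * m))) *
        (1 + (Real.exp (Real.log 2 / s * s) - 1) / s * D) ^ m ≤
      s * Real.exp (-(m * (1 - ν)) / (4 * s)) := by
  rw [div_mul_cancel₀ _ hs.ne', Real.exp_log two_pos]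
  have hpow : (1 + (2 - 1) / s * D) ^ m ≤ Real.exp (m * (D / s)) := by
    rw [show (2 - 1) / s * D = D / s by ring, Real.exp_nat_mul, add_comm]
    exact pow_le_pow_left₀ (by positivity) (Real.add_one_le_exp _) m
  have hexp : -(Real.log 2 / s * (2 * D * m)) + m * (D / s) ≤ -(m * (1 - ν)) / (4 * s) := by
    have hlog := Real.log_two_gt_d9
    have hm : (0 : ℝ) ≤ m := m.cast_nonneg
    have hlhs : -(Real.log 2 / s * (2 * D * m)) + m * (D / s) =
        -((2 * Real.log 2 - 1) * D * m * 4) / (4 * s) := by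
      field_simp
      ring
    rw [hlhs, div_le_div_iff_of_pos_right (by positivity)]
    nlinarith [mul_nonneg hm hν, mul_nonneg hm (by linarith : (0 : ℝ) ≤ D - 1)]
  calc s * Real.exp (-(Real.log 2 / s * (2 * D * m))) * (1 + (2 - 1) / s * D) ^ m
      ≤ s * Real.exp (-(Real.log 2 / s * (2 * D * m))) * Real.exp (m * (D / s)) := by gcongr
    _ = s * Real.exp (-(Real.log 2 / s * (2 * D * m)) + m * (D / s)) := by
        rw [Real.exp_add, mul_assoc]
    _ ≤ s * Real.exp (-(m * (1 - ν)) / (4 * s)) := by gcongr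

theorem sample_scatter_max_eig_general
    (n m : ℕ) (W : Matrix (Fin n) (Fin n) ℝ) (b : Fin n → ℝ)
    (q : ℝ)
    (hNE1 : 1 ≤ (NEset W b).card) (hNE2 : (NEset W b).card < 2 ^ n)
    (hq1 : ((NEset W b).card : ℝ) / (2 : ℝ) ^ n < q) (hq2 : q < 1)
    (i : Fin n) (Dmax : ℝ)
    (hScat : maxEigSubLE (popScatter q (NEset W b) i) (supp (vvec W b i)) Dmax) :
    1 - ((supp (vvec W b i)).card : ℝ) *
          Real.exp (-((m : ℝ) * (1 - mixCoef n q (NEset W b).card)) /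
            (4 * ((supp (vvec W b i)).card : ℝ))) ≤
      iidProb (pObs q (NEset W b)) m
        {D | maxEigSubLT (sampleScatter i D) (supp (vvec W b i)) (2 * Dmax)} := by
  set S := supp (vvec W b i)
  have hp := pObs_nonneg (le_trans (by positivity) hq1.le) hq2.le hNE2
  have hp1 := sum_pObs (q := q) hNE1 hNE2
  rw [iidProb_eq_one_sub_compl hp1, sub_le_sub_iff_left]
  rcases S.eq_empty_or_nonempty with hS | hS
  · simp [hS, maxEigSubLT_empty, iidProb]
  have : Nonempty S := hS.to_subtype
  set ζ : (Fin n → Bool) → S → ℝ := fun x j => zvec i x j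
  have hζ : ∀ x j, ζ x j * ζ x j = 1 := fun x j => zvec_mul_self i x j
  have hA := restrict_dotProduct_sum_le_of_maxEigSubLE (w := pObs q (NEset W b)) (v := zvec i) hScat
  have hD := one_le_of_dotProduct_sum_smul_vecMulVec_le hp1 hζ hA
  have hs : (0 : ℝ) < Fintype.card S := by exact_mod_cast Fintype.card_pos
  have hbad : {D | maxEigSubLT (sampleScatter i D) S (2 * Dmax)}ᶜ ⊆
      {D | ∃ u, u ≠ 0 ∧ 2 * Dmax * m * (u ⬝ᵥ u) ≤
        u ⬝ᵥ (∑ l, vecMulVec (ζ (D l)) (ζ (D l))) *ᵥ u} :=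
    fun _ => exists_restrict_of_not_maxEigSubLT
  calc iidProb _ m _ ≤ iidProb _ m _ := iidProb_mono hp hbad
    _ ≤ _ := iidProb_exists_dotProduct_sum_vecMulVec_ge_le hp hp1 hs
        (fun x => dotProduct_self_eq_card (hζ x)) (by linarith) hA
        (θ := Real.log 2 / Fintype.card S) (by positivity) (by positivity) m
    _ ≤ _ := by
        simpa only [Fintype.card_coe] using mul_exp_mul_pow_le hs hD (mixCoef_nonneg hNE2 hq1) m

/-- if `λ_max(E_{x∼p}[z_S z_Sᵀ]) ≤ D_max`, then
`λ_max((1/m)·∑_l z⁽ˡ⁾_S (z⁽ˡ⁾_S)ᵀ) < 2·D_max` with probability at least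
`1 - |S|·exp(-m(1-ν)/(4|S|))` over the i.i.d. draw of the `m` samples from `p`. -/
theorem sample_scatter_max_eig
    (n m : ℕ) (W : Matrix (Fin n) (Fin n) ℝ) (b : Fin n → ℝ)
    (hdiag : ∀ i, W i i = 0) (q : ℝ)
    (hNE1 : 1 ≤ (NEset W b).card) (hNE2 : (NEset W b).card < 2 ^ n)
    (hq1 : ((NEset W b).card : ℝ) / (2 : ℝ) ^ n < q) (hq2 : q < 1)
    (i : Fin n) (Dmax : ℝ)
    (hScat : maxEigSubLE (popScatter q (NEset W b) i) (supp (vvec W b i)) Dmax) :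
    1 - ((supp (vvec W b i)).card : ℝ) *
          Real.exp (-((m : ℝ) * (1 - mixCoef n q (NEset W b).card)) /
            (4 * ((supp (vvec W b i)).card : ℝ))) ≤
      iidProb (pObs q (NEset W b)) m
        {D | maxEigSubLT (sampleScatter i D) (supp (vvec W b i)) (2 * Dmax)} :=
  sample_scatter_max_eig_general n m W b q hNE1 hNE2 hq1 hq2 i Dmax hScat
end
end

section
/- Fix data z^(1),…,z^(m) ∈ {−1,+1}^n, a vector v*_S ∈ ℝ^{|S|} (restriction of v* to its support S), and Δ_S ∈ ℝ^{|S|} with ‖Δ_S‖₂ = b. Suppose (i) λ_min((1/m)·Σ_l η(v*_Sᵀ z^(l)_S) z^(l)_S (z^(l)_S)ᵀ) ≥ C_min/2, (ii) λ_max((1/m)·Σ_l z^(l)_S (z^(l)_S)ᵀ) ≤ 2·D_max, and (iii) b·√|S|·D_max/5 ≤ C_min/4. Then for every θ ∈ [0,1], λ_min((1/m)·Σ_l η((v*_S + θΔ_S)ᵀ z^(l)_S) z^(l)_S (z^(l)_S)ᵀ) ≥ C_min/4. -/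
/- Common setup: linear influence games (LIGs), the PSNE set, the noisy
observation model, feature vectors, the logistic loss and its gradient,
population/sample Hessian and scatter matrices, and Rayleigh-quotient
encodings of eigenvalue bounds for (symmetric) submatrices.

Joint actions in `{-1,+1}^n` are modeled as `Fin n → Bool` via the sign map
`sgn` (`true ↦ +1`, `false ↦ -1`).  For player `i`, the feature vector
`z_i(x) = (x_i · x_{-i}, x_i)` and the parameter vector `v_i = (w_{i,-i}, -b_i)`
are indexed by `Fin n`, with the bias coordinate placed at index `i`
(a fixed permutation of the paper's coordinate ordering), so that
`v_i ⬝ᵥ z_i(x) = x_i (∑_{j ≠ i} W i j · x_j - b i)` is player `i`'s payoff. -/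

open Matrix Finset

noncomputable section

/-!
The weight `η` is `1/10`-Lipschitz: `|η'(s)| = |e^{s/2} - e^{-s/2}| / (e^{s/2} + e^{-s/2})³`,
whose maximum is `1/(6√3)`. Since the `z⁽ˡ⁾` have `±1` entries, `|Δᵀz⁽ˡ⁾| ≤ ‖Δ‖₂ √|S|`, so along
the segment every weight `η(·ᵀz⁽ˡ⁾)` drops by at most `ε = b √|S| / 10`. In the Rayleigh
quotient this lowers the minimum eigenvalue by at most `ε · λ_max(scatter) ≤ b √|S| D_max / 5`,
which is at most `C_min / 4`.
-/

theorem quadForm_smul_sum_vecMulVec {m n : ℕ} (c : ℝ) (w : Fin m → ℝ)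
    (z : Fin m → Fin n → ℝ) (y : Fin n → ℝ) :
    quadForm (c • ∑ l, w l • vecMulVec (z l) (z l)) y = c * ∑ l, w l * (z l ⬝ᵥ y) ^ 2 := by
  rw [quadForm, dotProduct_comm]
  simp only [smul_mulVec, sum_mulVec, vecMulVec_mulVec, op_smul_eq_smul, smul_dotProduct,
    sum_dotProduct, smul_eq_mul]
  ring_nf

theorem quadForm_smul_sum_vecMulVec_one {m n : ℕ} (c : ℝ)
    (z : Fin m → Fin n → ℝ) (y : Fin n → ℝ) :
    quadForm (c • ∑ l, vecMulVec (z l) (z l)) y = c * ∑ l, (z l ⬝ᵥ y) ^ 2 := by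
  simpa using quadForm_smul_sum_vecMulVec c (fun _ => 1) z y

theorem ten_mul_abs_sub_le_add_pow_three {A B : ℝ} (hA : 0 < A) (hB : 0 < B) (hAB : A * B = 1) :
    10 * |A - B| ≤ (A + B) ^ 3 := by
  -- with `t = (A + B)² ≥ 4`, the squared claim is `t³ - 100 t + 400 ≥ 0`
  have hsq : (A - B) ^ 2 = (A + B) ^ 2 - 4 := by linear_combination (-4) * hAB
  have hg : 4 ≤ (A + B) ^ 2 := by nlinarith [sq_nonneg (A - B)]
  have key : (10 * |A - B|) ^ 2 ≤ ((A + B) ^ 3) ^ 2 := by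
    rw [mul_pow, sq_abs, hsq]
    nlinarith [mul_nonneg (sub_nonneg.2 hg) (sq_nonneg ((A + B) ^ 2 - 6))]
  exact pow_le_pow_iff_left₀ (by positivity) (by positivity) two_ne_zero |>.1 key

theorem hasDerivAt_eta (s : ℝ) :
    HasDerivAt eta
      (-((Real.exp (s / 2) - Real.exp (-s / 2)) / (Real.exp (s / 2) + Real.exp (-s / 2)) ^ 3))
      s := by
  have hexp : HasDerivAt (fun x => Real.exp (x / 2) + Real.exp (-x / 2))
      (Real.exp (s / 2) * (1 / 2) + Real.exp (-s / 2) * (-1 / 2)) s :=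
    ((hasDerivAt_id s).div_const 2).exp.add (by simpa using ((hasDerivAt_id s).neg.div_const 2).exp)
  have hpos : 0 < Real.exp (s / 2) + Real.exp (-s / 2) := by positivity
  have heta : eta = fun x => ((Real.exp (x / 2) + Real.exp (-x / 2)) ^ 2)⁻¹ := by
    funext x; rw [eta, one_div]
  rw [heta]
  refine ((hexp.pow 2).inv (pow_pos hpos 2).ne').congr_deriv ?_
  simp only [Pi.pow_apply]
  field_simp
  ring

theorem abs_eta_sub_le (x y : ℝ) : |eta x - eta y| ≤ |x - y| / 10 := by
  have hbound : ∀ s, ‖-((Real.exp (s / 2) - Real.exp (-s / 2)) /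
      (Real.exp (s / 2) + Real.exp (-s / 2)) ^ 3)‖ ≤ 1 / 10 := fun s => by
    have hprod : Real.exp (s / 2) * Real.exp (-s / 2) = 1 := by
      rw [← Real.exp_add, neg_div, add_neg_cancel, Real.exp_zero]
    have hpos : 0 < (Real.exp (s / 2) + Real.exp (-s / 2)) ^ 3 := by positivity
    have := ten_mul_abs_sub_le_add_pow_three (Real.exp_pos (s / 2)) (Real.exp_pos (-s / 2)) hprod
    rw [norm_neg, Real.norm_eq_abs, abs_div, abs_of_pos hpos, div_le_iff₀ hpos]
    linarith
  have := convex_univ.norm_image_sub_le_of_norm_hasDerivWithin_le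
    (fun s _ => (hasDerivAt_eta s).hasDerivWithinAt) (fun s _ => hbound s)
    (Set.mem_univ y) (Set.mem_univ x)
  rw [Real.norm_eq_abs, Real.norm_eq_abs] at this
  linarith

theorem abs_dotProduct_le_sqrt_sum_sq_mul_sqrt_card {ι : Type*} [Fintype ι] {S : Finset ι}
    {Δ z : ι → ℝ} (hΔ : ∀ j ∉ S, Δ j = 0) (hz : ∀ j, |z j| ≤ 1) :
    |Δ ⬝ᵥ z| ≤ √(∑ j, Δ j ^ 2) * √(#S : ℝ) := by
  have hsupp : ∀ f : ι → ℝ, (∀ j ∉ S, f j = 0) → ∑ j ∈ S, f j = ∑ j, f j := fun f hf =>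
    Finset.sum_subset S.subset_univ fun j _ hj => hf j hj
  have hl1 : |Δ ⬝ᵥ z| ≤ ∑ j ∈ S, |Δ j| := calc
    |Δ ⬝ᵥ z| = |∑ j ∈ S, Δ j * z j| := by
      rw [dotProduct, hsupp _ fun j hj => by rw [hΔ j hj, zero_mul]]
    _ ≤ ∑ j ∈ S, |Δ j * z j| := Finset.abs_sum_le_sum_abs _ _
    _ ≤ ∑ j ∈ S, |Δ j| := Finset.sum_le_sum fun j _ => by
      rw [abs_mul]; exact mul_le_of_le_one_right (abs_nonneg _) (hz j)
  have hcs : (∑ j ∈ S, |Δ j|) ^ 2 ≤ #S * ∑ j, Δ j ^ 2 := by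
    simpa [sq_abs, hsupp (fun j => Δ j ^ 2) fun j hj => by simp [hΔ j hj]] using
      sq_sum_le_card_mul_sum_sq (s := S) (f := fun j => |Δ j|)
  calc |Δ ⬝ᵥ z| ≤ √(#S * ∑ j, Δ j ^ 2) := hl1.trans (Real.le_sqrt_of_sq_le hcs)
    _ = √(∑ j, Δ j ^ 2) * √(#S : ℝ) := by rw [Real.sqrt_mul (Nat.cast_nonneg _), mul_comm]

theorem minEigSubGE.mono {n : ℕ} {M : Matrix (Fin n) (Fin n) ℝ} {S : Finset (Fin n)} {a b : ℝ}
    (h : minEigSubGE M S a) (hba : b ≤ a) : minEigSubGE M S b := fun y hy =>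
  (mul_le_mul_of_nonneg_right hba (Finset.sum_nonneg fun j _ => sq_nonneg (y j))).trans (h y hy)

theorem minEigSubGE_smul_sum_of_sub_le {m n : ℕ} {S : Finset (Fin n)} {z : Fin m → Fin n → ℝ}
    {w₀ w₁ : Fin m → ℝ} {c a d ε : ℝ} (hc : 0 ≤ c) (hε : 0 ≤ ε) (hw : ∀ l, w₀ l - ε ≤ w₁ l)
    (h₀ : minEigSubGE (c • ∑ l, w₀ l • vecMulVec (z l) (z l)) S a)
    (hd : maxEigSubLE (c • ∑ l, vecMulVec (z l) (z l)) S d) :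
    minEigSubGE (c • ∑ l, w₁ l • vecMulVec (z l) (z l)) S (a - ε * d) := by
  intro y hy
  have ha := h₀ y hy
  have hdy := hd y hy
  rw [quadForm_smul_sum_vecMulVec] at ha ⊢
  rw [quadForm_smul_sum_vecMulVec_one] at hdy
  calc (a - ε * d) * ∑ j, y j ^ 2 = a * ∑ j, y j ^ 2 - ε * (d * ∑ j, y j ^ 2) := by ring
    _ ≤ c * ∑ l, w₀ l * (z l ⬝ᵥ y) ^ 2 - ε * (c * ∑ l, (z l ⬝ᵥ y) ^ 2) := by
      gcongr
    _ = c * ∑ l, (w₀ l - ε) * (z l ⬝ᵥ y) ^ 2 := by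
      simp only [sub_mul, Finset.sum_sub_distrib, ← Finset.mul_sum]; ring
    _ ≤ c * ∑ l, w₁ l * (z l ⬝ᵥ y) ^ 2 := by
      gcongr with l; exact hw l

theorem eta_sub_le_eta_dotProduct_add_mul {ι : Type*} [Fintype ι] {v Δ z : ι → ℝ} {θ r : ℝ}
    (hθ : θ ∈ Set.Icc (0 : ℝ) 1) (hΔz : |Δ ⬝ᵥ z| ≤ r) :
    eta (v ⬝ᵥ z) - r / 10 ≤ eta ((fun j => v j + θ * Δ j) ⬝ᵥ z) := by
  have hshift : (fun j => v j + θ * Δ j) ⬝ᵥ z - v ⬝ᵥ z = θ * (Δ ⬝ᵥ z) := by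
    simp only [dotProduct, add_mul, Finset.sum_add_distrib, Finset.mul_sum, mul_assoc]
    ring
  have hstep : |θ * (Δ ⬝ᵥ z)| ≤ r := by
    rw [abs_mul, abs_of_nonneg hθ.1]
    exact (mul_le_of_le_one_left (abs_nonneg _) hθ.2).trans hΔz
  have := abs_le.1 (abs_eta_sub_le ((fun j => v j + θ * Δ j) ⬝ᵥ z) (v ⬝ᵥ z))
  rw [hshift] at this
  linarith

/-- Vectors `v` and `Δ` supported on `S` play the roles of `v*_S` and `Δ_S` (so that
`v ⬝ᵥ z⁽ˡ⁾ = v*_Sᵀ z⁽ˡ⁾_S`, and the Rayleigh quotients over vectors supported on `S` are those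
of the corresponding `S × S` matrices). -/
theorem hessian_min_eig_along_segment_general
    (n m : ℕ) (S : Finset (Fin n)) (zl : Fin m → (Fin n → ℝ))
    (hz : ∀ l j, zl l j = 1 ∨ zl l j = -1)
    (v Δ : Fin n → ℝ)
    (hΔ : ∀ j ∉ S, Δ j = 0)
    (bb Cmin Dmax : ℝ)
    (hb : Real.sqrt (∑ j, Δ j ^ 2) = bb)
    (h1 : minEigSubGE
      ((1 / (m : ℝ)) • ∑ l, eta (v ⬝ᵥ zl l) • vecMulVec (zl l) (zl l))
      S (Cmin / 2))
    (h2 : maxEigSubLE ((1 / (m : ℝ)) • ∑ l, vecMulVec (zl l) (zl l))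
      S (2 * Dmax))
    (h3 : bb * Real.sqrt (S.card : ℝ) * Dmax / 5 ≤ Cmin / 4) :
    ∀ θ : ℝ, θ ∈ Set.Icc (0 : ℝ) 1 →
      minEigSubGE
        ((1 / (m : ℝ)) •
          ∑ l, eta ((fun j => v j + θ * Δ j) ⬝ᵥ zl l) • vecMulVec (zl l) (zl l))
        S (Cmin / 4) := by
  intro θ hθ
  have hΔz : ∀ l, |Δ ⬝ᵥ zl l| ≤ bb * √(#S : ℝ) := fun l => hb ▸
    abs_dotProduct_le_sqrt_sum_sq_mul_sqrt_card hΔ fun j => by rcases hz l j with h | h <;> simp [h]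
  have hε : 0 ≤ bb * √(#S : ℝ) / 10 := by rw [← hb]; positivity
  refine (minEigSubGE_smul_sum_of_sub_le (by positivity) hε
    (fun l => eta_sub_le_eta_dotProduct_add_mul hθ (hΔz l)) h1 h2).mono ?_
  linarith

/-- fixed-design control of the minimum eigenvalue of the sample
Hessian along the segment from `v*_S` to `v*_S + Δ_S`.  Vectors `v` and `Δ`
supported on `S` play the roles of `v*_S` and `Δ_S` (so that, e.g.,
`v ⬝ᵥ z⁽ˡ⁾ = v*_Sᵀ z⁽ˡ⁾_S`, and the Rayleigh quotients over vectors supported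
on `S` are those of the corresponding `S × S` matrices). -/
theorem hessian_min_eig_along_segment
    (n m : ℕ) (S : Finset (Fin n)) (zl : Fin m → (Fin n → ℝ))
    (hz : ∀ l j, zl l j = 1 ∨ zl l j = -1)
    (v Δ : Fin n → ℝ)
    (hv : ∀ j ∉ S, v j = 0) (hΔ : ∀ j ∉ S, Δ j = 0)
    (bb Cmin Dmax : ℝ) (hC : 0 < Cmin) (hD : 0 < Dmax)
    (hb : Real.sqrt (∑ j, Δ j ^ 2) = bb)
    (h1 : minEigSubGE
      ((1 / (m : ℝ)) • ∑ l, eta (v ⬝ᵥ zl l) • vecMulVec (zl l) (zl l))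
      S (Cmin / 2))
    (h2 : maxEigSubLE ((1 / (m : ℝ)) • ∑ l, vecMulVec (zl l) (zl l))
      S (2 * Dmax))
    (h3 : bb * Real.sqrt (S.card : ℝ) * Dmax / 5 ≤ Cmin / 4) :
    ∀ θ : ℝ, θ ∈ Set.Icc (0 : ℝ) 1 →
      minEigSubGE
        ((1 / (m : ℝ)) •
          ∑ l, eta ((fun j => v j + θ * Δ j) ⬝ᵥ zl l) • vecMulVec (zl l) (zl l))
        S (Cmin / 4) :=
  hessian_min_eig_along_segment_general n m S zl hz v Δ hΔ bb Cmin Dmax hb h1 h2 h3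
end
end
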